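/- arXiv:1810.10843 — 5 statements merged into one kernel-verified Lean document; each statement's English description precedes it below -/
import Mathlib

section
/- Comparison of two Loewner traces on a fixed time interval (Lemma 3.1): Let λ : [0,1] → ℝ be in the class D, and let δ : (0,∞) → (0,∞) be such that for all ε > 0, all t ∈ [0,1] and all z₁, z₂ ∈ ℍ, |z₁ − z₂| ≤ δ(ε) implies |f^λ_t(z₁) − f^λ_t(z₂)| ≤ ε. Let osc(r) := sup{|λ(u) − λ(v)| : u, v ∈ [0,1], |u − v| ≤ r}. Let Δt > 0 and 0 ≤ t₀ < t₁ < t₂ ≤ 1 with t₁ − t₀ ≤ Δt and t₂ − t₁ ≤ Δt. Let ξ : [0,1] → ℝ be continuous with ξ(0) = 0, and let γ^ξ, γ^λ : [t₁,t₂] → ℂ and γ^ξ_{t₀}, γ^λ_{t₀} : [t₀,t₂] → ℂ be functions satisfying: (i) for all s ∈ [t₀,t₂], |Re γ^ξ_{t₀}(s)| ≤ sup_{u∈[t₀,s]} |ξ(u) − ξ(t₀)|, 0 ≤ Im γ^ξ_{t₀}(s) ≤ 2√(s − t₀), |Re γ^λ_{t₀}(s)| ≤ sup_{u∈[t₀,s]}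 |λ(u) − λ(t₀)| and 0 ≤ Im γ^λ_{t₀}(s) ≤ 2√(s − t₀) (these express that the trace points lie in the corresponding Loewner hulls); (ii) Im γ^λ_{t₀}(t) > 0 for all t ∈ (t₀,t₂]; (iii) c := inf_{t∈[t₁,t₂]} Im γ^ξ_{t₀}(t) > 0; (iv) for all t ∈ [t₁,t₂], γ^ξ(t) = f^ξ_{t₀}(γ^ξ_{t₀}(t) + ξ(t₀)) and γ^λ(t) = f^λ_{t₀}(γ^λ_{t₀}(t) + λ(t₀)) (the concatenation property of Loewner traces). Suppose moreover that ε₀, ε₁, ε̄, a > 0 satisfy sup_{s∈[0,t₀]} |ξ(s) − λ(s)| ≤ ε₀, sup_{s∈[t₀,t₂]} |(ξ(s) − ξ(t₀)) − (λ(s) − λ(t₀))| ≤ ε₁, ε₀ ≤ ε̄, ε₁ ≤ ε̄, and 2·osc(2Δt) + 2√(2Δt) + 5ε̄ ≤ δ(a). Then for all t ∈ [t₁,t₂]: |γ^ξ(t) − γ^λ(t)| ≤ a + ε₀·(√(4t₀ + c²)/c − 1). -/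
/-!
Write `z = γ^ξ_{t₀}(t) + ξ(t₀)` and `z' = γ^λ_{t₀}(t) + λ(t₀)`, so that
`γ^ξ(t) - γ^λ(t) = (f^ξ_{t₀} z - f^λ_{t₀} z) + (f^λ_{t₀} z - f^λ_{t₀} z')`.
The hull bounds (i) give `|z - z'| ≤ 2 osc(2Δt) + 2√(2Δt) + ε₀ + ε₁ ≤ δ(a)`, so the second
difference is at most `a`.

The first compares the reverse Loewner flows `h₁, h₂` from `z` driven by `ξ` and `λ`. Along them
`Im z ≤ Im hᵢ(s)`, `(Im hᵢ(s))² ≤ (Im z)² + 4s` and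
`|h₁ - h₂|' ≤ 2 (|h₁ - h₂| + ε₀) / (|A₁| |A₂|)`, where `Aᵢ = hᵢ - driver`. By AM-GM,
`2 / (|A₁| |A₂|) ≤ |A₁|⁻² + |A₂|⁻²`, the logarithmic derivative of `√(Im h₁ Im h₂)`, so
`(|h₁ - h₂| + ε₀) / √(Im h₁ Im h₂)` does not increase. This gives
`|h₁(t₀) - h₂(t₀)| ≤ ε₀ (√(4t₀ + (Im z)²) / Im z - 1)`, which decreases in `Im z ≥ c`.
-/

/-- A continuous function `λ : [0,1] → ℝ` belongs to the class `D` if `λ 0 = 0` and `λ` has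
locally vanishing `1/2`-Hölder norm. -/
def ClassD (lam : ℝ → ℝ) : Prop :=
  ContinuousOn lam (Set.Icc 0 1) ∧ lam 0 = 0 ∧
    ∀ ε > (0 : ℝ), ∃ δ > (0 : ℝ), ∀ s t : ℝ, 0 ≤ s → s ≤ t → t ≤ 1 → t - s < δ →
      |lam t - lam s| ≤ ε * Real.sqrt (t - s)

/-- `f` is the family of inverse Loewner maps `f^U_t` of the driver `U`: `f^U_0 z = z`, and for
`t ∈ (0,1]` and `z ∈ ℍ`, `f^U_t z = h t` where `h` solves the reverse Loewner equation
`h 0 = z`, `h'(s) = -2/(h s - U (t - s))` on `[0,t]`. -/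
def IsInvLoewnerMap (U : ℝ → ℝ) (f : ℝ → ℂ → ℂ) : Prop :=
  (∀ z : ℂ, f 0 z = z) ∧
  ∀ t ∈ Set.Ioc (0 : ℝ) 1, ∀ z : ℂ, 0 < z.im →
    ∃ h : ℝ → ℂ, h 0 = z ∧
      (∀ s ∈ Set.Icc (0 : ℝ) t, h s - (U (t - s) : ℂ) ≠ 0 ∧
        HasDerivWithinAt h (-2 / (h s - (U (t - s) : ℂ))) (Set.Icc 0 t) s) ∧
      f t z = h t

/-- The modulus of continuity `osc(r) = sup {|λ u - λ v| : u, v ∈ [0,1], |u - v| ≤ r}`. -/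
noncomputable def oscOn (lam : ℝ → ℝ) (r : ℝ) : ℝ :=
  sSup {y : ℝ | ∃ u ∈ Set.Icc (0 : ℝ) 1, ∃ v ∈ Set.Icc (0 : ℝ) 1, |u - v| ≤ r ∧ y = |lam u - lam v|}

open Set Filter Topology

theorem norm_add_mul_le_of_norm_deriv_right_mul_le {E : Type*} [NormedAddCommGroup E]
    [NormedSpace ℝ E] {f f' : ℝ → E} {φ φ' : ℝ → ℝ} {a b ε : ℝ}
    (hf : ContinuousOn f (Icc a b)) (hf' : ∀ x ∈ Ico a b, HasDerivWithinAt f (f' x) (Ici x) x)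
    (hφ : ContinuousOn φ (Icc a b)) (hφ' : ∀ x ∈ Ico a b, HasDerivWithinAt φ (φ' x) (Ici x) x)
    (hφ_pos : ∀ x ∈ Icc a b, 0 < φ x)
    (bound : ∀ x ∈ Ico a b, ‖f' x‖ * φ x ≤ (‖f x‖ + ε) * φ' x) :
    ∀ x ∈ Icc a b, (‖f x‖ + ε) * φ a ≤ (‖f a‖ + ε) * φ x := by
  intro x hx
  have hφa := hφ_pos a (left_mem_Icc.2 (hx.1.trans hx.2))
  set C := (‖f a‖ + ε) / φ a
  -- `(C + η (y - a)) φ y - ε` is a strict upper fence for `‖f y‖` for every `η > 0`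
  have fence : ∀ η > 0, ‖f x‖ ≤ (C + η * (x - a)) * φ x - ε := by
    intro η hη
    refine image_norm_le_of_norm_deriv_right_lt_deriv_boundary' hf hf'
      (B := fun y => (C + η * (y - a)) * φ y - ε)
      (B' := fun y => η * φ y + (C + η * (y - a)) * φ' y) ?_ (by fun_prop) ?_ ?_ hx
    · simp only [sub_self, mul_zero, add_zero, C, div_mul_cancel₀ _ hφa.ne', add_sub_cancel_right,
        le_refl]
    · intro y hy
      have hlin : HasDerivWithinAt (fun y => C + η * (y - a)) η (Ici y) y := by
        simpa using (((hasDerivWithinAt_id y (Ici y)).sub_const a).const_mul η).const_add C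
      exact (hlin.mul (hφ' y hy)).sub_const ε
    · intro y hy hfy
      have hφy := hφ_pos y (Ico_subset_Icc_self hy)
      have h := bound y hy
      rw [hfy, sub_add_cancel] at h
      have : ‖f' y‖ ≤ (C + η * (y - a)) * φ' y := le_of_mul_le_mul_right (by linarith) hφy
      linarith [mul_pos hη hφy]
  have hlim : Tendsto (fun η => (C + η * (x - a)) * φ x - ε) (𝓝[>] 0) (𝓝 (C * φ x - ε)) := by
    have : Continuous fun η : ℝ => (C + η * (x - a)) * φ x - ε := by fun_prop
    exact tendsto_nhdsWithin_of_tendsto_nhds (this.tendsto' 0 _ (by simp))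
  have := ge_of_tendsto hlim (eventually_nhdsWithin_of_forall fence)
  rwa [div_mul_eq_mul_div, le_sub_iff_add_le, le_div_iff₀ hφa] at this

def IsReverseLoewnerFlow (V : ℝ → ℝ) (T : ℝ) (h : ℝ → ℂ) : Prop :=
  ∀ s ∈ Icc 0 T, h s - V s ≠ 0 ∧ HasDerivWithinAt h (-2 / (h s - V s)) (Icc 0 T) s

theorem Complex.im_neg_two_div (z : ℂ) : (-2 / z).im = 2 * z.im / ‖z‖ ^ 2 := by
  rw [Complex.div_im, ← Complex.normSq_eq_norm_sq]
  simp only [Complex.neg_re, Complex.neg_im, Complex.re_ofNat, Complex.im_ofNat]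
  ring

theorem norm_two_div_sub_two_div_le {z w : ℂ} (hz : z ≠ 0) (hw : w ≠ 0) :
    ‖2 / z - 2 / w‖ ≤ (1 / ‖z‖ ^ 2 + 1 / ‖w‖ ^ 2) * ‖z - w‖ := by
  have hz' := norm_pos_iff.2 hz
  have hw' := norm_pos_iff.2 hw
  have amgm : 2 / (‖z‖ * ‖w‖) ≤ 1 / ‖z‖ ^ 2 + 1 / ‖w‖ ^ 2 := by
    have := sq_nonneg (1 / ‖z‖ - 1 / ‖w‖)
    field_simp at this ⊢
    nlinarith
  have hdiff : 2 / z - 2 / w = 2 * (w - z) / (z * w) := by field_simp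
  calc ‖2 / z - 2 / w‖ = 2 / (‖z‖ * ‖w‖) * ‖z - w‖ := by
        rw [hdiff, norm_div, norm_mul, norm_mul, Complex.norm_two, norm_sub_rev]
        ring
    _ ≤ _ := by gcongr

namespace IsReverseLoewnerFlow

variable {V : ℝ → ℝ} {T : ℝ} {h : ℝ → ℂ}

theorem continuousOn (hh : IsReverseLoewnerFlow V T h) : ContinuousOn h (Icc 0 T) :=
  fun s hs => (hh s hs).2.continuousWithinAt

theorem hasDerivWithinAt_Ici (hh : IsReverseLoewnerFlow V T h) {s : ℝ} (hs : s ∈ Ico 0 T) :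
    HasDerivWithinAt h (-2 / (h s - V s)) (Ici s) s :=
  (hh s (Ico_subset_Icc_self hs)).2.mono_of_mem_nhdsWithin (Icc_mem_nhdsGE_of_mem hs)

theorem hasDerivWithinAt_im (hh : IsReverseLoewnerFlow V T h) {s : ℝ} (hs : s ∈ Icc 0 T) :
    HasDerivWithinAt (fun s => (h s).im) (2 * (h s).im / ‖h s - V s‖ ^ 2) (Icc 0 T) s := by
  have : HasDerivWithinAt (fun s => (h s).im) (-2 / (h s - V s)).im (Icc 0 T) s :=
    Complex.imCLM.hasFDerivAt.comp_hasDerivWithinAt s (hh s hs).2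
  rwa [Complex.im_neg_two_div, Complex.sub_im, Complex.ofReal_im, sub_zero] at this

theorem hasDerivWithinAt_im_sq (hh : IsReverseLoewnerFlow V T h) {s : ℝ} (hs : s ∈ Icc 0 T) :
    HasDerivWithinAt (fun s => (h s).im ^ 2) (4 * (h s).im ^ 2 / ‖h s - V s‖ ^ 2) (Icc 0 T) s := by
  refine ((hh.hasDerivWithinAt_im hs).fun_pow 2).congr_deriv ?_
  norm_num
  ring

theorem sq_im_zero_le (hh : IsReverseLoewnerFlow V T h) {s : ℝ} (hs : s ∈ Icc 0 T) :
    (h 0).im ^ 2 ≤ (h s).im ^ 2 := by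
  refine monotoneOn_of_hasDerivWithinAt_nonneg (convex_Icc 0 T)
    (fun x hx => (hh.hasDerivWithinAt_im_sq hx).continuousWithinAt)
    (fun x hx => (hh.hasDerivWithinAt_im_sq (interior_subset hx)).mono interior_subset)
    (fun x _ => by positivity) (left_mem_Icc.2 (hs.1.trans hs.2)) hs hs.1

theorem sq_im_le (hh : IsReverseLoewnerFlow V T h) {s : ℝ} (hs : s ∈ Icc 0 T) :
    (h s).im ^ 2 ≤ (h 0).im ^ 2 + 4 * s := by
  have hd : ∀ x ∈ Icc 0 T, HasDerivWithinAt (fun s => (h s).im ^ 2 - 4 * s)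
      (4 * (h x).im ^ 2 / ‖h x - V x‖ ^ 2 - 4) (Icc 0 T) x := fun x hx =>
    (hh.hasDerivWithinAt_im_sq hx).sub (by simpa using (hasDerivWithinAt_id x _).const_mul 4)
  have hanti : AntitoneOn (fun s => (h s).im ^ 2 - 4 * s) (Icc 0 T) := by
    refine antitoneOn_of_hasDerivWithinAt_nonpos (convex_Icc 0 T)
      (fun x hx => (hd x hx).continuousWithinAt)
      (fun x hx => (hd x (interior_subset hx)).mono interior_subset) fun x hx => ?_
    have hx := interior_subset hx
    have hne := norm_pos_iff.2 (hh x hx).1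
    have him : (h x).im ^ 2 ≤ ‖h x - V x‖ ^ 2 := by
      simpa using sq_le_sq' (abs_le.1 (Complex.abs_im_le_norm (h x - V x))).1
        (abs_le.1 (Complex.abs_im_le_norm (h x - V x))).2
    rw [sub_nonpos, div_le_iff₀ (by positivity)]
    linarith
  have := hanti (left_mem_Icc.2 (hs.1.trans hs.2)) hs hs.1
  simp only [mul_zero, sub_zero] at this
  linarith

theorem im_zero_le_im (hh : IsReverseLoewnerFlow V T h) (h0 : 0 < (h 0).im) {s : ℝ}
    (hs : s ∈ Icc 0 T) : (h 0).im ≤ (h s).im := by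
  have him : ContinuousOn (fun s => (h s).im) (Icc 0 T) :=
    Complex.continuous_im.comp_continuousOn hh.continuousOn
  -- `(h ·).im` cannot vanish on `[0, T]` since its square stays above `(h 0).im ^ 2`
  have hpos : 0 < (h s).im := by
    by_contra! hle
    obtain ⟨u, hu, hu0⟩ := isPreconnected_Icc.intermediate_value hs
      (left_mem_Icc.2 (hs.1.trans hs.2)) him ⟨hle, h0.le⟩
    have := hh.sq_im_zero_le hu
    simp only [hu0] at this
    nlinarith
  exact (sq_le_sq₀ h0.le hpos.le).1 (hh.sq_im_zero_le hs)

theorem norm_sub_le_of_abs_sub_le {V₁ V₂ : ℝ → ℝ} {h₁ h₂ : ℝ → ℂ} {ε : ℝ}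
    (hh₁ : IsReverseLoewnerFlow V₁ T h₁) (hh₂ : IsReverseLoewnerFlow V₂ T h₂) (hT : 0 ≤ T)
    (h0 : h₁ 0 = h₂ 0) (hy : 0 < (h₁ 0).im) (hV : ∀ s ∈ Icc 0 T, |V₁ s - V₂ s| ≤ ε) :
    ‖h₁ T - h₂ T‖ ≤ ε * (√(4 * T + (h₁ 0).im ^ 2) / (h₁ 0).im - 1) := by
  set y := (h₁ 0).im
  have hy₂ : (h₂ 0).im = y := by rw [← h0]
  have hP_pos : ∀ s ∈ Icc 0 T, 0 < (h₁ s).im * (h₂ s).im := fun s hs =>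
    mul_pos (hy.trans_le (hh₁.im_zero_le_im hy hs))
      (hy.trans_le (hy₂ ▸ hh₂.im_zero_le_im (hy₂ ▸ hy) hs))
  set φ := fun s => √((h₁ s).im * (h₂ s).im)
  have hφ' : ∀ s ∈ Icc 0 T, HasDerivWithinAt φ
      (φ s * (1 / ‖h₁ s - V₁ s‖ ^ 2 + 1 / ‖h₂ s - V₂ s‖ ^ 2)) (Icc 0 T) s := by
    intro s hs
    have hne₁ := norm_pos_iff.2 (hh₁ s hs).1
    have hne₂ := norm_pos_iff.2 (hh₂ s hs).1
    have hφs := Real.sqrt_pos.2 (hP_pos s hs)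
    convert ((hh₁.hasDerivWithinAt_im hs).fun_mul (hh₂.hasDerivWithinAt_im hs)).sqrt
      (hP_pos s hs).ne' using 1
    rw [eq_div_iff (by positivity)]
    simp only [φ]
    field_simp
    rw [Real.sq_sqrt (hP_pos s hs).le]
  have hbound : ∀ x ∈ Ico 0 T, ‖-2 / (h₁ x - V₁ x) - -2 / (h₂ x - V₂ x)‖ * φ x ≤
      (‖h₁ x - h₂ x‖ + ε) * (φ x * (1 / ‖h₁ x - V₁ x‖ ^ 2 + 1 / ‖h₂ x - V₂ x‖ ^ 2)) := by
    intro x hx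
    have hx' := Ico_subset_Icc_self hx
    have hdriver : ‖(h₁ x - V₁ x) - (h₂ x - V₂ x)‖ ≤ ‖h₁ x - h₂ x‖ + ε := by
      calc ‖(h₁ x - V₁ x) - (h₂ x - V₂ x)‖ = ‖(h₁ x - h₂ x) - ((V₁ x - V₂ x : ℝ) : ℂ)‖ := by
            push_cast; ring_nf
        _ ≤ ‖h₁ x - h₂ x‖ + |V₁ x - V₂ x| := by
            rw [← Real.norm_eq_abs, ← Complex.norm_real]
            exact _root_.norm_sub_le _ _
        _ ≤ ‖h₁ x - h₂ x‖ + ε := by gcongr; exact hV x hx'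
    rw [neg_div, neg_div, neg_sub_neg, norm_sub_rev, mul_comm (φ x), ← mul_assoc]
    refine mul_le_mul_of_nonneg_right ?_ (Real.sqrt_nonneg _)
    rw [mul_comm]
    exact (norm_two_div_sub_two_div_le (hh₁ x hx').1 (hh₂ x hx').1).trans (by gcongr)
  have key := norm_add_mul_le_of_norm_deriv_right_mul_le (f := fun s => h₁ s - h₂ s)
    (hh₁.continuousOn.sub hh₂.continuousOn)
    (fun x hx => (hh₁.hasDerivWithinAt_Ici hx).sub (hh₂.hasDerivWithinAt_Ici hx))
    (fun s hs => (hφ' s hs).continuousWithinAt)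
    (fun x hx => (hφ' x (Ico_subset_Icc_self hx)).mono_of_mem_nhdsWithin
      (Icc_mem_nhdsGE_of_mem hx))
    (fun s hs => Real.sqrt_pos.2 (hP_pos s hs)) hbound T (right_mem_Icc.2 hT)
  have hε : 0 ≤ ε := (abs_nonneg _).trans (hV 0 (left_mem_Icc.2 hT))
  have hφ0 : φ 0 = y := by
    show √(y * (h₂ 0).im) = y
    rw [hy₂, Real.sqrt_mul_self hy.le]
  have hφT : φ T ≤ √(4 * T + y ^ 2) := by
    have := hh₁.sq_im_le (right_mem_Icc.2 hT)
    have := hh₂.sq_im_le (right_mem_Icc.2 hT)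
    refine Real.sqrt_le_sqrt ?_
    nlinarith [sq_nonneg ((h₁ T).im - (h₂ T).im)]
  rw [hφ0, h0, sub_self, norm_zero, zero_add] at key
  rw [mul_sub, mul_one, mul_div_assoc', le_sub_iff_add_le, le_div_iff₀ hy]
  exact key.trans (mul_le_mul_of_nonneg_left hφT hε)

end IsReverseLoewnerFlow

theorem IsInvLoewnerMap.norm_sub_le_of_abs_sub_le {U₁ U₂ : ℝ → ℝ} {f₁ f₂ : ℝ → ℂ → ℂ}
    (hf₁ : IsInvLoewnerMap U₁ f₁) (hf₂ : IsInvLoewnerMap U₂ f₂) {t ε : ℝ} (ht : t ∈ Icc (0 : ℝ) 1)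
    (hU : ∀ s ∈ Icc 0 t, |U₁ s - U₂ s| ≤ ε) {z : ℂ} (hz : 0 < z.im) :
    ‖f₁ t z - f₂ t z‖ ≤ ε * (√(4 * t + z.im ^ 2) / z.im - 1) := by
  rcases ht.1.eq_or_lt with rfl | ht₀
  · simp [hf₁.1, hf₂.1, Real.sqrt_sq hz.le, hz.ne']
  obtain ⟨h₁, h₁0, hh₁, hf₁t⟩ := hf₁.2 t ⟨ht₀, ht.2⟩ z hz
  obtain ⟨h₂, h₂0, hh₂, hf₂t⟩ := hf₂.2 t ⟨ht₀, ht.2⟩ z hz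
  rw [hf₁t, hf₂t, ← h₁0]
  exact IsReverseLoewnerFlow.norm_sub_le_of_abs_sub_le (V₁ := fun s => U₁ (t - s))
    (V₂ := fun s => U₂ (t - s)) hh₁ hh₂ ht.1 (h₁0.trans h₂0.symm) (h₁0 ▸ hz)
    fun s hs => hU (t - s) ⟨by linarith [hs.2], by linarith [hs.1]⟩

theorem abs_sub_le_oscOn {lam : ℝ → ℝ} (hlam : ContinuousOn lam (Icc 0 1)) {r u v : ℝ}
    (hu : u ∈ Icc (0 : ℝ) 1) (hv : v ∈ Icc (0 : ℝ) 1) (huv : |u - v| ≤ r) :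
    |lam u - lam v| ≤ oscOn lam r := by
  obtain ⟨M, hM⟩ := isCompact_Icc.exists_bound_of_continuousOn hlam
  refine le_csSup ⟨2 * M, ?_⟩ ⟨u, hu, v, hv, huv, rfl⟩
  rintro _ ⟨u, hu, v, hv, -, rfl⟩
  have hu := hM u hu
  have hv := hM v hv
  rw [Real.norm_eq_abs] at hu hv
  linarith [abs_sub (lam u) (lam v)]

theorem iSup_abs_sub_le_oscOn_add {lam g : ℝ → ℝ} (hlam : ContinuousOn lam (Icc 0 1))
    {t₀ s r ε : ℝ} (ht₀ : 0 ≤ t₀) (hts : t₀ ≤ s) (hs : s ≤ 1) (hr : s - t₀ ≤ r)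
    (hg : ∀ u ∈ Icc t₀ s, |(g u - g t₀) - (lam u - lam t₀)| ≤ ε) :
    ⨆ u : Icc t₀ s, |g u - g t₀| ≤ oscOn lam r + ε := by
  have : Nonempty (Icc t₀ s) := (nonempty_Icc.2 hts).to_subtype
  refine ciSup_le fun u => ?_
  have hosc := abs_sub_le_oscOn hlam (r := r) ⟨ht₀.trans u.2.1, u.2.2.trans hs⟩ ⟨ht₀, hts.trans hs⟩
    (by rw [abs_of_nonneg (sub_nonneg.2 u.2.1)]; linarith [u.2.2])
  linarith [abs_sub_abs_le_abs_sub (g u - g t₀) (lam u - lam t₀), hg u u.2]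

theorem norm_add_ofReal_sub_add_ofReal_le (w₁ w₂ : ℂ) (x₁ x₂ : ℝ) :
    ‖(w₁ + x₁) - (w₂ + x₂)‖ ≤ |w₁.re| + |w₂.re| + |x₁ - x₂| + |w₁.im - w₂.im| := by
  refine (Complex.norm_le_abs_re_add_abs_im _).trans ?_
  simp only [Complex.sub_re, Complex.add_re, Complex.ofReal_re, Complex.sub_im, Complex.add_im,
    Complex.ofReal_im, add_zero]
  rw [show w₁.re + x₁ - (w₂.re + x₂) = (w₁.re - w₂.re) + (x₁ - x₂) by ring]
  linarith [abs_sub w₁.re w₂.re, abs_add_le (w₁.re - w₂.re) (x₁ - x₂)]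

theorem sqrt_four_mul_add_sq_div_le {T c y : ℝ} (hT : 0 ≤ T) (hc : 0 < c) (hcy : c ≤ y) :
    √(4 * T + y ^ 2) / y ≤ √(4 * T + c ^ 2) / c := by
  have hy := hc.trans_le hcy
  have key : ∀ x > 0, √(4 * T + x ^ 2) / x = √(4 * T / x ^ 2 + 1) := fun x hx => by
    rw [← Real.sqrt_sq hx.le, ← Real.sqrt_div' _ (sq_nonneg x), Real.sqrt_sq hx.le, add_div,
      div_self (by positivity)]
  rw [key y hy, key c hc]
  gcongr

-- The Loewner hull of the driver `U (t₀ + ·) - U t₀` at time `s - t₀` lies in this box.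
def HullBox (U : ℝ → ℝ) (t₀ s : ℝ) : Set ℂ :=
  {w | |w.re| ≤ ⨆ u : Icc t₀ s, |U u - U t₀| ∧ 0 ≤ w.im ∧ w.im ≤ 2 * √(s - t₀)}

theorem norm_add_sub_add_le_of_mem_hullBox {lam ξ : ℝ → ℝ} (hlam : ContinuousOn lam (Icc 0 1))
    {t₀ t r ε₀ ε₁ : ℝ} {w₁ w₂ : ℂ} (ht₀ : 0 ≤ t₀) (ht₀t : t₀ ≤ t) (ht : t ≤ 1)
    (hr : t - t₀ ≤ r) (hw₁ : w₁ ∈ HullBox ξ t₀ t) (hw₂ : w₂ ∈ HullBox lam t₀ t)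
    (hε₀ : |ξ t₀ - lam t₀| ≤ ε₀)
    (hε₁ : ∀ u ∈ Icc t₀ t, |(ξ u - ξ t₀) - (lam u - lam t₀)| ≤ ε₁) :
    ‖(w₁ + ξ t₀) - (w₂ + lam t₀)‖ ≤ 2 * oscOn lam r + 2 * √r + ε₀ + ε₁ := by
  obtain ⟨hre₁, him₁, him₁'⟩ := hw₁
  obtain ⟨hre₂, him₂, him₂'⟩ := hw₂
  have hosc₁ := hre₁.trans (iSup_abs_sub_le_oscOn_add hlam ht₀ ht₀t ht hr hε₁)
  have hosc₂ := hre₂.trans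
    (iSup_abs_sub_le_oscOn_add hlam ht₀ ht₀t ht hr (ε := 0) fun u _ => by simp)
  have him : |w₁.im - w₂.im| ≤ 2 * √r :=
    (abs_sub_le_of_nonneg_of_le him₁ him₁' him₂ him₂').trans (by gcongr)
  linarith [norm_add_ofReal_sub_add_ofReal_le w₁ w₂ (ξ t₀) (lam t₀)]

theorem stmt0_general
    (lam ξ : ℝ → ℝ) (hlam : ClassD lam)
    (flam fξ : ℝ → ℂ → ℂ)
    (hflam : IsInvLoewnerMap lam flam) (hfξ : IsInvLoewnerMap ξ fξ)
    (δ : ℝ → ℝ)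
    (hδ : ∀ ε > (0 : ℝ), ∀ t ∈ Set.Icc (0 : ℝ) 1, ∀ z₁ z₂ : ℂ, 0 < z₁.im → 0 < z₂.im →
      ‖z₁ - z₂‖ ≤ δ ε → ‖flam t z₁ - flam t z₂‖ ≤ ε)
    (Δt t₀ t₁ t₂ : ℝ)
    (ht₀ : 0 ≤ t₀) (h01 : t₀ < t₁) (ht₂ : t₂ ≤ 1)
    (hgap1 : t₁ - t₀ ≤ Δt) (hgap2 : t₂ - t₁ ≤ Δt)
    (γξ γlam γξ0 γlam0 : ℝ → ℂ)
    -- (i) the trace points lie in the corresponding Loewner hulls: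
    (hhullξ : ∀ s ∈ Set.Icc t₀ t₂,
      |(γξ0 s).re| ≤ (⨆ u : Set.Icc t₀ s, |ξ ↑u - ξ t₀|) ∧
      0 ≤ (γξ0 s).im ∧ (γξ0 s).im ≤ 2 * Real.sqrt (s - t₀))
    (hhulllam : ∀ s ∈ Set.Icc t₀ t₂,
      |(γlam0 s).re| ≤ (⨆ u : Set.Icc t₀ s, |lam ↑u - lam t₀|) ∧
      0 ≤ (γlam0 s).im ∧ (γlam0 s).im ≤ 2 * Real.sqrt (s - t₀))
    -- (ii)
    (hlampos : ∀ t ∈ Set.Ioc t₀ t₂, 0 < (γlam0 t).im)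
    -- (iii)
    (c : ℝ) (hc : c = ⨅ t : Set.Icc t₁ t₂, (γξ0 ↑t).im) (hcpos : 0 < c)
    -- (iv) the concatenation property of Loewner traces:
    (hconcat : ∀ t ∈ Set.Icc t₁ t₂,
      γξ t = fξ t₀ (γξ0 t + (ξ t₀ : ℂ)) ∧ γlam t = flam t₀ (γlam0 t + (lam t₀ : ℂ)))
    (ε₀ ε₁ εbar a : ℝ)
    (hε₀pos : 0 < ε₀) (hapos : 0 < a)
    (hsup0 : ∀ s ∈ Set.Icc (0 : ℝ) t₀, |ξ s - lam s| ≤ ε₀)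
    (hsup1 : ∀ s ∈ Set.Icc t₀ t₂, |(ξ s - ξ t₀) - (lam s - lam t₀)| ≤ ε₁)
    (hε₀bar : ε₀ ≤ εbar) (hε₁bar : ε₁ ≤ εbar)
    (hδa : 2 * oscOn lam (2 * Δt) + 2 * Real.sqrt (2 * Δt) + 5 * εbar ≤ δ a) :
    ∀ t ∈ Set.Icc t₁ t₂,
      ‖γξ t - γlam t‖ ≤ a + ε₀ * (Real.sqrt (4 * t₀ + c ^ 2) / c - 1) := by
  intro t ht
  have ht₀t : t₀ ≤ t := h01.le.trans ht.1
  have ht₀1 : t₀ ∈ Icc (0 : ℝ) 1 := ⟨ht₀, ht₀t.trans (ht.2.trans ht₂)⟩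
  have hc_le : c ≤ (γξ0 t).im := by
    rw [hc]
    refine ciInf_le ⟨0, ?_⟩ (⟨t, ht⟩ : Icc t₁ t₂)
    rintro _ ⟨u, rfl⟩
    exact (hhullξ u ⟨h01.le.trans u.2.1, u.2.2⟩).2.1
  set zξ := γξ0 t + (ξ t₀ : ℂ)
  set zlam := γlam0 t + (lam t₀ : ℂ)
  have hc_le_zξ : c ≤ zξ.im := by simpa [zξ] using hc_le
  have hzξ : 0 < zξ.im := hcpos.trans_le hc_le_zξ
  have hzlam : 0 < zlam.im := by simpa [zlam] using hlampos t ⟨h01.trans_le ht.1, ht.2⟩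
  have hdist : ‖zξ - zlam‖ ≤ δ a :=
    (norm_add_sub_add_le_of_mem_hullBox (r := 2 * Δt) hlam.1 ht₀ ht₀t (ht.2.trans ht₂)
      (by linarith [ht.2])
      (hhullξ t ⟨ht₀t, ht.2⟩) (hhulllam t ⟨ht₀t, ht.2⟩) (hsup0 t₀ ⟨ht₀, le_rfl⟩)
      fun u hu => hsup1 u ⟨hu.1, hu.2.trans ht.2⟩).trans (by linarith)
  have hdriver : ‖fξ t₀ zξ - flam t₀ zξ‖ ≤ ε₀ * (√(4 * t₀ + c ^ 2) / c - 1) :=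
    (hfξ.norm_sub_le_of_abs_sub_le hflam ht₀1 hsup0 hzξ).trans <| mul_le_mul_of_nonneg_left
      (sub_le_sub_right (sqrt_four_mul_add_sq_div_le ht₀ hcpos hc_le_zξ) 1) hε₀pos.le
  rw [(hconcat t ht).1, (hconcat t ht).2, add_comm a]
  calc ‖fξ t₀ zξ - flam t₀ zlam‖ ≤ ‖fξ t₀ zξ - flam t₀ zξ‖ + ‖flam t₀ zξ - flam t₀ zlam‖ :=
        norm_sub_le_norm_sub_add_norm_sub _ _ _
    _ ≤ _ := add_le_add hdriver (hδ a hapos t₀ ht₀1 _ _ hzξ hzlam hdist)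

/-- **Comparison of two Loewner traces on a fixed time interval (Lemma 3.1).** -/
theorem stmt0
    (lam ξ : ℝ → ℝ) (hlam : ClassD lam)
    (hξcont : ContinuousOn ξ (Set.Icc 0 1)) (hξ0 : ξ 0 = 0)
    (flam fξ : ℝ → ℂ → ℂ)
    (hflam : IsInvLoewnerMap lam flam) (hfξ : IsInvLoewnerMap ξ fξ)
    (δ : ℝ → ℝ) (hδpos : ∀ ε > (0 : ℝ), 0 < δ ε)
    (hδ : ∀ ε > (0 : ℝ), ∀ t ∈ Set.Icc (0 : ℝ) 1, ∀ z₁ z₂ : ℂ, 0 < z₁.im → 0 < z₂.im →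
      ‖z₁ - z₂‖ ≤ δ ε → ‖flam t z₁ - flam t z₂‖ ≤ ε)
    (Δt t₀ t₁ t₂ : ℝ) (hΔt : 0 < Δt)
    (ht₀ : 0 ≤ t₀) (h01 : t₀ < t₁) (h12 : t₁ < t₂) (ht₂ : t₂ ≤ 1)
    (hgap1 : t₁ - t₀ ≤ Δt) (hgap2 : t₂ - t₁ ≤ Δt)
    (γξ γlam γξ0 γlam0 : ℝ → ℂ)
    -- (i) the trace points lie in the corresponding Loewner hulls:
    (hhullξ : ∀ s ∈ Set.Icc t₀ t₂,
      |(γξ0 s).re| ≤ (⨆ u : Set.Icc t₀ s, |ξ ↑u - ξ t₀|) ∧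
      0 ≤ (γξ0 s).im ∧ (γξ0 s).im ≤ 2 * Real.sqrt (s - t₀))
    (hhulllam : ∀ s ∈ Set.Icc t₀ t₂,
      |(γlam0 s).re| ≤ (⨆ u : Set.Icc t₀ s, |lam ↑u - lam t₀|) ∧
      0 ≤ (γlam0 s).im ∧ (γlam0 s).im ≤ 2 * Real.sqrt (s - t₀))
    -- (ii)
    (hlampos : ∀ t ∈ Set.Ioc t₀ t₂, 0 < (γlam0 t).im)
    -- (iii)
    (c : ℝ) (hc : c = ⨅ t : Set.Icc t₁ t₂, (γξ0 ↑t).im) (hcpos : 0 < c)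
    -- (iv) the concatenation property of Loewner traces:
    (hconcat : ∀ t ∈ Set.Icc t₁ t₂,
      γξ t = fξ t₀ (γξ0 t + (ξ t₀ : ℂ)) ∧ γlam t = flam t₀ (γlam0 t + (lam t₀ : ℂ)))
    (ε₀ ε₁ εbar a : ℝ)
    (hε₀pos : 0 < ε₀) (hε₁pos : 0 < ε₁) (hεbarpos : 0 < εbar) (hapos : 0 < a)
    (hsup0 : ∀ s ∈ Set.Icc (0 : ℝ) t₀, |ξ s - lam s| ≤ ε₀)
    (hsup1 : ∀ s ∈ Set.Icc t₀ t₂, |(ξ s - ξ t₀) - (lam s - lam t₀)| ≤ ε₁)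
    (hε₀bar : ε₀ ≤ εbar) (hε₁bar : ε₁ ≤ εbar)
    (hδa : 2 * oscOn lam (2 * Δt) + 2 * Real.sqrt (2 * Δt) + 5 * εbar ≤ δ a) :
    ∀ t ∈ Set.Icc t₁ t₂,
      ‖γξ t - γlam t‖ ≤ a + ε₀ * (Real.sqrt (4 * t₀ + c ^ 2) / c - 1) :=
  stmt0_general lam ξ hlam flam fξ hflam hfξ δ hδ Δt t₀ t₁ t₂ ht₀ h01 ht₂ hgap1 hgap2 γξ γlam γξ0
    γlam0 hhullξ hhulllam hlampos c hc hcpos hconcat ε₀ ε₁ εbar a hε₀pos hapos hsup0 hsup1 hε₀bar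
    hε₁bar hδa
end

section
/- Size of Loewner hulls (Lemma 2.1): Let t > 0, let λ : [0,t] → ℝ be continuous, and let z ∈ ℍ. Suppose there are T ∈ (0, t] and a function g : [0,T) → ℂ such that g(0) = z, g(s) − λ(s) ≠ 0 and g'(s) = 2/(g(s) − λ(s)) for all s ∈ [0,T), and liminf_{s→T⁻} |g(s) − λ(s)| = 0 (i.e. the point z is swallowed by the Loewner flow by time t, so z lies in the hull K_t). Then |Re z| ≤ sup_{s∈[0,t]} |λ(s)| and Im z ≤ 2√t. -/
/-
With `w = g - λ`: on the line `Re g = c` with `c > sup λ` we have `Re g' = 2 Re w / |w|² > 0`, so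
the half-plane `Re g ≥ c` is never left and `|w| ≥ c - sup λ` stays bounded away from `0`; the
reflection `g ↦ -ḡ`, `λ ↦ -λ` handles `Re z < -sup |λ|`. For the height,
`((Im g)²)' = -4 (Im w)² / |w|² ≥ -4`, so `(Im z)² ≤ (Im g s)² + 4s ≤ |w s|² + 4t`, and `|w s|` gets
arbitrarily small.
-/

open Set Filter Topology Complex ComplexConjugate

def IsLoewnerSolution (lam : ℝ → ℝ) (T : ℝ) (g : ℝ → ℂ) : Prop :=
  ∀ s ∈ Ico (0 : ℝ) T, HasDerivWithinAt g (2 / (g s - lam s)) (Ico 0 T) s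

lemma HasDerivWithinAt.re {f : ℝ → ℂ} {f' : ℂ} {s : Set ℝ} {x : ℝ}
    (h : HasDerivWithinAt f f' s x) : HasDerivWithinAt (fun u => (f u).re) f'.re s x :=
  reCLM.hasFDerivAt.comp_hasDerivWithinAt x h

lemma HasDerivWithinAt.im {f : ℝ → ℂ} {f' : ℂ} {s : Set ℝ} {x : ℝ}
    (h : HasDerivWithinAt f f' s x) : HasDerivWithinAt (fun u => (f u).im) f'.im s x :=
  imCLM.hasFDerivAt.comp_hasDerivWithinAt x h

lemma Complex.re_two_div_pos {w : ℂ} (hw : 0 < w.re) : 0 < (2 / w).re := by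
  have hN : 0 < normSq w := normSq_pos.2 fun h => by simp [h] at hw
  simp only [div_re, re_ofNat, im_ofNat, zero_mul, zero_div, add_zero]
  exact div_pos (by positivity) hN

lemma Complex.neg_two_le_im_mul_im_two_div (w : ℂ) : -2 ≤ w.im * (2 / w).im := by
  have hle : w.im * w.im / normSq w ≤ 1 :=
    div_le_one_of_le₀ (by rw [normSq_apply]; nlinarith) (normSq_nonneg w)
  have : w.im * (2 / w).im = -2 * (w.im * w.im / normSq w) := by
    simp only [div_im, re_ofNat, im_ofNat, zero_mul, zero_div, zero_sub]
    ring
  linarith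

namespace IsLoewnerSolution

variable {lam : ℝ → ℝ} {T : ℝ} {g : ℝ → ℂ}

lemma continuousOn (hg : IsLoewnerSolution lam T g) : ContinuousOn g (Ico 0 T) :=
  fun s hs => (hg s hs).continuousWithinAt

lemma hasDerivWithinAt_Ici (hg : IsLoewnerSolution lam T g) {s : ℝ} (hs : s ∈ Ico 0 T) :
    HasDerivWithinAt g (2 / (g s - lam s)) (Ici s) s :=
  (hg s hs).mono_of_mem_nhdsWithin <|
    mem_of_superset (Ico_mem_nhdsGE hs.2) (Ico_subset_Ico_left hs.1)

lemma neg_conj (hg : IsLoewnerSolution lam T g) :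
    IsLoewnerSolution (fun s => -lam s) T (fun s => -conj (g s)) := by
  intro s hs
  refine ((hg s hs).star.neg).congr_deriv ?_
  simp only [ofReal_neg, star_def, map_div₀, map_ofNat, map_sub, conj_ofReal, ← div_neg]
  congr 1
  ring

lemma norm_sub_le (hg : IsLoewnerSolution lam T g) {ε : ℝ} (hε : 0 < ε)
    (hfar : ∀ s ∈ Ico 0 T, ε ≤ ‖g s - lam s‖) {s : ℝ} (hs : s ∈ Ico 0 T) :
    ‖g s - g 0‖ ≤ 2 / ε * s := by
  have hlip := Convex.norm_image_sub_le_of_norm_hasDerivWithin_le hg (C := 2 / ε)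
    (fun u hu => by
      rw [norm_div, Complex.norm_two]
      exact div_le_div_of_nonneg_left zero_le_two hε (hfar u hu))
    (convex_Ico 0 T) ⟨le_rfl, hs.1.trans_lt hs.2⟩ hs
  simpa [abs_of_nonneg hs.1] using hlip

lemma exists_norm_sub_lt (hg : IsLoewnerSolution lam T g) (hT : 0 < T) {M : ℝ}
    (hM : ∀ s ∈ Ico 0 T, |lam s| ≤ M)
    (hblow : liminf (fun s => ‖g s - lam s‖) (𝓝[<] T) = 0) {ε : ℝ} (hε : 0 < ε) :
    ∃ s ∈ Ico 0 T, ‖g s - lam s‖ < ε := by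
  by_contra! hfar
  have hnear : ∀ᶠ s in 𝓝[<] T, s ∈ Ico 0 T :=
    mem_of_superset (Ioo_mem_nhdsLT hT) Ioo_subset_Ico_self
  -- an upper bound is needed: the `liminf` of a function tending to `∞` is the junk value `0`
  have hbdd : ∀ᶠ s in 𝓝[<] T, ‖g s - lam s‖ ≤ ‖g 0‖ + 2 / ε * T + M := by
    filter_upwards [hnear] with s hs
    have hgs := hg.norm_sub_le hε hfar hs
    have hT' : 2 / ε * s ≤ 2 / ε * T := by gcongr; exact hs.2.le
    calc ‖g s - lam s‖ = ‖(g s - g 0) + g 0 - lam s‖ := by rw [sub_add_cancel]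
      _ ≤ ‖g s - g 0‖ + ‖g 0‖ + ‖(lam s : ℂ)‖ := norm_sub_le_of_le (norm_add_le _ _) le_rfl
      _ ≤ ‖g 0‖ + 2 / ε * T + M := by
        rw [norm_real, Real.norm_eq_abs]
        linarith [hM s hs]
  have hlim := le_liminf_of_le (isCoboundedUnder_ge_of_eventually_le _ hbdd)
    (hnear.mono fun s hs => hfar s hs)
  linarith

lemma le_re (hg : IsLoewnerSolution lam T g) {c : ℝ} (hlam : ∀ s ∈ Ico 0 T, lam s < c)
    (h0 : c ≤ (g 0).re) {s : ℝ} (hs : s ∈ Ico 0 T) : c ≤ (g s).re := by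
  have hsub : Icc 0 s ⊆ Ico 0 T := Icc_subset_Ico_right hs.2
  have hsub' : Ico 0 s ⊆ Ico 0 T := Ico_subset_Icc_self.trans hsub
  suffices h : -(g s).re ≤ -c by linarith
  refine image_le_of_deriv_right_lt_deriv_boundary
    (f := fun u => -(g u).re) (f' := fun u => -(2 / (g u - lam u)).re)
    (B := fun _ => -c) (B' := fun _ => 0)
    (continuous_re.comp_continuousOn (hg.continuousOn.mono hsub)).neg
    (fun u hu => (hg.hasDerivWithinAt_Ici (hsub' hu)).re.neg) (neg_le_neg h0)
    (fun _ => hasDerivAt_const _ (-c)) (fun u hu hu_eq => ?_) ⟨hs.1, le_rfl⟩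
  have hre : 0 < (g u - lam u).re := by
    simp only [sub_re, ofReal_re]
    linarith [neg_inj.1 hu_eq, hlam u (hsub' hu)]
  simpa using re_two_div_pos hre

lemma re_le (hg : IsLoewnerSolution lam T g) {M : ℝ} (hM : ∀ s ∈ Ico 0 T, lam s ≤ M)
    (hswallow : ∀ ε > 0, ∃ s ∈ Ico 0 T, ‖g s - lam s‖ < ε) : (g 0).re ≤ M := by
  by_contra! h
  obtain ⟨c, hMc, hc0⟩ := exists_between h
  obtain ⟨s, hs, hsmall⟩ := hswallow (c - M) (by linarith)
  have hc : c ≤ (g s).re := hg.le_re (fun u hu => (hM u hu).trans_lt (by linarith)) (by linarith) hs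
  have hre := re_le_norm (g s - lam s)
  simp only [sub_re, ofReal_re] at hre
  linarith [hM s hs]

lemma abs_re_le (hg : IsLoewnerSolution lam T g) {M : ℝ} (hM : ∀ s ∈ Ico 0 T, |lam s| ≤ M)
    (hswallow : ∀ ε > 0, ∃ s ∈ Ico 0 T, ‖g s - lam s‖ < ε) : |(g 0).re| ≤ M := by
  have hreflect : ∀ s, -conj (g s) - ((-lam s : ℝ) : ℂ) = -conj (g s - lam s) := fun s => by
    simp only [ofReal_neg, map_sub, conj_ofReal]
    ring
  have hneg := hg.neg_conj.re_le (fun s hs => (neg_le_abs _).trans (hM s hs)) fun ε hε => by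
    obtain ⟨s, hs, hsmall⟩ := hswallow ε hε
    exact ⟨s, hs, by rwa [hreflect, norm_neg, norm_conj]⟩
  simp only [neg_re, conj_re] at hneg
  exact abs_le.2 ⟨by linarith, hg.re_le (fun s hs => (le_abs_self _).trans (hM s hs)) hswallow⟩

lemma im_sq_sub_le (hg : IsLoewnerSolution lam T g) {s : ℝ} (hs : s ∈ Ico 0 T) :
    (g 0).im ^ 2 - 4 * s ≤ (g s).im ^ 2 := by
  have hsub : Icc 0 s ⊆ Ico 0 T := Icc_subset_Ico_right hs.2
  have hsub' : Ico 0 s ⊆ Ico 0 T := Ico_subset_Icc_self.trans hsub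
  refine image_le_of_deriv_right_le_deriv_boundary
    (f := fun u => (g 0).im ^ 2 - 4 * u) (f' := fun _ => -4)
    (B := fun u => (g u).im ^ 2) (B' := fun u => 2 * (g u).im * (2 / (g u - lam u)).im)
    (by fun_prop) (fun u _ => ?_) (by simp)
    ((continuous_im.comp_continuousOn (hg.continuousOn.mono hsub)).pow 2)
    (fun u hu => ?_) (fun u hu => ?_) ⟨hs.1, le_rfl⟩
  · simpa using ((hasDerivWithinAt_id u _).const_mul 4).const_sub ((g 0).im ^ 2)
  · simpa using (hg.hasDerivWithinAt_Ici (hsub' hu)).im.fun_pow 2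
  · have := neg_two_le_im_mul_im_two_div (g u - lam u)
    simp only [sub_im, ofReal_im, sub_zero] at this
    linarith

lemma im_sq_le (hg : IsLoewnerSolution lam T g)
    (hswallow : ∀ ε > 0, ∃ s ∈ Ico 0 T, ‖g s - lam s‖ < ε) : (g 0).im ^ 2 ≤ 4 * T := by
  refine le_of_forall_pos_le_add fun δ hδ => ?_
  obtain ⟨s, hs, hsmall⟩ := hswallow (√δ) (Real.sqrt_pos.2 hδ)
  have him : |(g s).im| ≤ √δ := by
    simpa using (abs_im_le_norm (g s - lam s)).trans hsmall.le
  have him_sq : (g s).im ^ 2 ≤ δ := by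
    simpa [sq_abs, Real.sq_sqrt hδ.le] using pow_le_pow_left₀ (abs_nonneg _) him 2
  linarith [hg.im_sq_sub_le hs, hs.2]

end IsLoewnerSolution

theorem stmt2_general (t : ℝ) (lam : ℝ → ℝ) (hlam : ContinuousOn lam (Set.Icc 0 t))
    (z : ℂ)
    (T : ℝ) (hT0 : 0 < T) (hTt : T ≤ t)
    (g : ℝ → ℂ) (hg0 : g 0 = z)
    (hode : ∀ s ∈ Set.Ico (0 : ℝ) T, g s - (lam s : ℂ) ≠ 0 ∧
      HasDerivWithinAt g (2 / (g s - (lam s : ℂ))) (Set.Ico 0 T) s)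
    (hblow : Filter.liminf (fun s => ‖g s - (lam s : ℂ)‖)
      (nhdsWithin T (Set.Iio T)) = 0) :
    |z.re| ≤ (⨆ s : Set.Icc (0 : ℝ) t, |lam s|) ∧ z.im ≤ 2 * Real.sqrt t := by
  subst hg0
  have hbdd : BddAbove (range fun s : Icc (0 : ℝ) t => |lam s|) := by
    simpa only [image_eq_range] using (isCompact_Icc.image_of_continuousOn hlam.abs).bddAbove
  have hM : ∀ s ∈ Ico 0 T, |lam s| ≤ ⨆ s : Icc (0 : ℝ) t, |lam s| := fun s hs =>
    le_ciSup hbdd ⟨s, hs.1, hs.2.le.trans hTt⟩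
  have hg : IsLoewnerSolution lam T g := fun s hs => (hode s hs).2
  have hswallow := fun ε (hε : 0 < ε) => hg.exists_norm_sub_lt hT0 hM hblow hε
  refine ⟨hg.abs_re_le hM hswallow, ?_⟩
  calc (g 0).im ≤ √(4 * t) := (le_abs_self _).trans <|
        Real.abs_le_sqrt <| (hg.im_sq_le hswallow).trans (by linarith)
    _ = 2 * √t := by rw [Real.sqrt_mul zero_le_four, show (4 : ℝ) = 2 ^ 2 by norm_num,
        Real.sqrt_sq zero_le_two]

/-- **Size of Loewner hulls (Lemma 2.1).**
If `z ∈ ℍ` is swallowed by the forward Loewner flow driven by `λ` by time `t`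
(i.e. the solution `g` of `g' = 2/(g - λ)`, `g 0 = z` exists on `[0, T)` for some
`T ≤ t` with `liminf_{s → T⁻} |g s - λ s| = 0`), then
`|Re z| ≤ sup_{s ∈ [0,t]} |λ s|` and `Im z ≤ 2 √t`. -/
theorem stmt2 (t : ℝ) (ht : 0 < t) (lam : ℝ → ℝ) (hlam : ContinuousOn lam (Set.Icc 0 t))
    (z : ℂ) (hz : 0 < z.im)
    (T : ℝ) (hT0 : 0 < T) (hTt : T ≤ t)
    (g : ℝ → ℂ) (hg0 : g 0 = z)
    (hode : ∀ s ∈ Set.Ico (0 : ℝ) T, g s - (lam s : ℂ) ≠ 0 ∧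
      HasDerivWithinAt g (2 / (g s - (lam s : ℂ))) (Set.Ico 0 T) s)
    (hblow : Filter.liminf (fun s => ‖g s - (lam s : ℂ)‖)
      (nhdsWithin T (Set.Iio T)) = 0) :
    |z.re| ≤ (⨆ s : Set.Icc (0 : ℝ) t, |lam s|) ∧ z.im ≤ 2 * Real.sqrt t :=
  stmt2_general t lam hlam z T hT0 hTt g hg0 hode hblow
end

section
/- Comparison of swallowing times of the reverse Loewner flow (Lemma 5.1): Let V¹, V² : [0,∞) → ℝ be continuous with V¹(0) = V²(0) = 0, let t > 0 and x > 0, and set δ := sup_{s∈[0,t]} |V¹(s) − V²(s)|. Suppose there exists h² : [0,t] → ℝ with h²(0) = x such that h²(s) − V²(s) > 0 and (h²)'(s) = −2/(h²(s) − V²(s)) for all s ∈ [0,t]. Then there exists h¹ : [0,t] → ℝ with h¹(0) = x + δ such that h¹(s) − V¹(s) > 0 and (h¹)'(s) = −2/(h¹(s) − V¹(s)) for all s ∈ [0,t]. Equivalently, in terms of the swallowing times T^j(y) (the first time the reverse flow started at y > 0 with driver V^j hits the driver): if T¹(x + δ) ≤ t then T²(x) ≤ t. -/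
/-!
Let `m > 0` be the minimum of `h₂ - V₂` on `[0, t]`. Cutting the denominator of the Loewner
field off below at `m` makes it globally Lipschitz, so Picard–Lindelöf gives a solution `h₁` of
the truncated equation with driver `V₁` from `x + δ` on all of `[0, t]`. Since `V₁ - V₂ ≤ δ`,
the shift `h₂ + δ` is a subsolution of the truncated equation, and the comparison principle gives
`h₂ + δ ≤ h₁`. Hence `h₁ - V₁ ≥ h₂ - V₂ ≥ m`, the cut-off is never active, and `h₁` solves the
reverse Loewner equation itself.
-/

open Set
open scoped NNReal

theorem le_of_subsolution_of_solution {v : ℝ → ℝ → ℝ} {K : ℝ≥0} {a b : ℝ} {f g g' : ℝ → ℝ}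
    (hv : ∀ s ∈ Ico a b, LipschitzWith K (v s))
    (hf : ∀ s ∈ Icc a b, HasDerivWithinAt f (v s (f s)) (Icc a b) s)
    (hg : ∀ s ∈ Icc a b, HasDerivWithinAt g (g' s) (Icc a b) s)
    (hg' : ∀ s ∈ Ico a b, g' s ≤ v s (g s)) (ha : g a ≤ f a) :
    ∀ s ∈ Icc a b, g s ≤ f s := by
  have right_deriv {φ φ' : ℝ → ℝ} (hφ : ∀ s ∈ Icc a b, HasDerivWithinAt φ (φ' s) (Icc a b) s)
      (s : ℝ) (hs : s ∈ Ico a b) : HasDerivWithinAt φ (φ' s) (Ici s) s :=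
    (hφ s (Ico_subset_Icc_self hs)).mono_of_mem_nhdsWithin (Icc_mem_nhdsGE_of_mem hs)
  set L : ℝ := K + 1
  intro s hs
  refine le_of_forall_pos_le_add fun η hη => ?_
  -- Fence `g` by `f + ε e^{2Lr}`: the fence grows faster than the Lipschitz error `K ε e^{2Lr}`.
  set ε := η / Real.exp (2 * L * s)
  have hε : 0 < ε := by positivity
  have hfence : ∀ r ∈ Icc a b, g r ≤ f r + ε * Real.exp (2 * L * r) := by
    have hexp (r : ℝ) : HasDerivAt (fun r => ε * Real.exp (2 * L * r))
        (ε * (Real.exp (2 * L * r) * (2 * L))) r := by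
      simpa using (((hasDerivAt_id r).const_mul (2 * L)).exp).const_mul ε
    refine image_le_of_deriv_right_lt_deriv_boundary'
      (fun r hr => (hg r hr).continuousWithinAt) (right_deriv hg)
      (by linarith [show 0 < ε * Real.exp (2 * L * a) by positivity])
      (fun r hr => ((hf r hr).continuousWithinAt).add (hexp r).continuousAt.continuousWithinAt)
      (fun r hr => (right_deriv hf r hr).add (hexp r).hasDerivWithinAt) ?_
    intro r hr hgr
    have hpos : 0 < ε * Real.exp (2 * L * r) := by positivity
    have hlip : v r (g r) - v r (f r) ≤ K * (ε * Real.exp (2 * L * r)) := by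
      have := (hv r hr).dist_le_mul (g r) (f r)
      rw [hgr] at this ⊢
      rw [Real.dist_eq, Real.dist_eq, add_sub_cancel_left, abs_of_pos hpos] at this
      exact (le_abs_self _).trans this
    nlinarith [hg' r hr, K.2]
  have := hfence s hs
  rwa [div_mul_cancel₀ _ (Real.exp_pos _).ne'] at this

theorem exists_hasDerivWithinAt_of_lipschitzWith_of_norm_le
    {E : Type*} [NormedAddCommGroup E] [NormedSpace ℝ E] [CompleteSpace E]
    {v : ℝ → E → E} {a b : ℝ} (hab : a ≤ b) {K M : ℝ≥0}
    (hlip : ∀ s ∈ Icc a b, LipschitzWith K (v s))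
    (hcont : ∀ y, ContinuousOn (v · y) (Icc a b))
    (hbound : ∀ s ∈ Icc a b, ∀ y, ‖v s y‖ ≤ M) (y₀ : E) :
    ∃ f : ℝ → E, f a = y₀ ∧ ∀ s ∈ Icc a b, HasDerivWithinAt f (v s (f s)) (Icc a b) s := by
  have hpl : IsPicardLindelof v (tmin := a) (tmax := b) ⟨a, left_mem_Icc.2 hab⟩ y₀
      (M * (b - a).toNNReal) 0 M K := by
    refine ⟨fun s hs => (hlip s hs).lipschitzOnWith, fun y _ => hcont y,
      fun s hs y _ => hbound s hs y, ?_⟩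
    simp [sub_nonneg.2 hab]
  exact hpl.exists_eq_forall_mem_Icc_hasDerivWithinAt₀

noncomputable def truncatedLoewnerField (V : ℝ → ℝ) (m s y : ℝ) : ℝ := -2 / max (y - V s) m

section truncatedLoewnerField

variable {V : ℝ → ℝ} {m s y : ℝ}

theorem truncatedLoewnerField_of_le (h : m ≤ y - V s) :
    truncatedLoewnerField V m s y = -2 / (y - V s) := by
  rw [truncatedLoewnerField, max_eq_left h]

theorem neg_two_div_le_truncatedLoewnerField {a : ℝ} (ha : 0 < a) (hay : a ≤ y - V s) :
    -2 / a ≤ truncatedLoewnerField V m s y := by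
  rw [truncatedLoewnerField, neg_div, neg_div, neg_le_neg_iff]
  exact div_le_div_of_nonneg_left zero_le_two ha (hay.trans (le_max_left _ _))

theorem abs_truncatedLoewnerField_le (hm : 0 < m) :
    |truncatedLoewnerField V m s y| ≤ 2 / m := by
  have hmax : 0 < max (y - V s) m := hm.trans_le (le_max_right _ _)
  rw [truncatedLoewnerField, abs_div, abs_neg, abs_two, abs_of_pos hmax]
  exact div_le_div_of_nonneg_left zero_le_two hm (le_max_right _ _)

theorem lipschitzWith_truncatedLoewnerField (hm : 0 < m) (s : ℝ) :
    LipschitzWith (2 / (m * m)).toNNReal (truncatedLoewnerField V m s) := by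
  refine LipschitzWith.of_dist_le_mul fun y z => ?_
  set Y := max (y - V s) m
  set Z := max (z - V s) m
  have hY : m ≤ Y := le_max_right _ _
  have hZ : m ≤ Z := le_max_right _ _
  have hYZ : |Y - Z| ≤ |y - z| := by
    simpa using abs_max_sub_max_le_abs (y - V s) (z - V s) m
  rw [Real.dist_eq, Real.dist_eq, Real.coe_toNNReal _ (by positivity)]
  have hdiff : -2 / Y - -2 / Z = 2 * (Y - Z) / (Y * Z) := by
    field_simp [(hm.trans_le hY).ne', (hm.trans_le hZ).ne']
    ring
  calc |-2 / Y - -2 / Z| = 2 * |Y - Z| / (Y * Z) := by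
        rw [hdiff, abs_div, abs_mul, abs_two,
          abs_of_pos (mul_pos (hm.trans_le hY) (hm.trans_le hZ))]
    _ ≤ 2 * |y - z| / (m * m) := by
        gcongr
    _ = 2 / (m * m) * |y - z| := by ring

theorem continuousOn_truncatedLoewnerField {S : Set ℝ} (hV : ContinuousOn V S) (hm : 0 < m)
    (y : ℝ) : ContinuousOn (truncatedLoewnerField V m · y) S :=
  continuousOn_const.div ((continuousOn_const.sub hV).sup continuousOn_const)
    fun _ _ => (hm.trans_le (le_max_right _ _)).ne'

end truncatedLoewnerField

theorem ContinuousOn.le_ciSup_of_isCompact {α : Type*} [TopologicalSpace α] {F : α → ℝ}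
    {S : Set α} (hS : IsCompact S) (hF : ContinuousOn F S) {s : α} (hs : s ∈ S) :
    F s ≤ ⨆ r : S, F r := by
  refine le_ciSup (f := fun r : S => F r) ?_ ⟨s, hs⟩
  simpa only [image_eq_range] using hS.bddAbove_image hF

theorem stmt7_general (V₁ V₂ : ℝ → ℝ)
    (hV₁ : ContinuousOn V₁ (Set.Ici 0)) (hV₂ : ContinuousOn V₂ (Set.Ici 0))
    (t x : ℝ) (ht : 0 < t)
    (δ : ℝ) (hδ : δ = ⨆ s : Set.Icc (0 : ℝ) t, |V₁ ↑s - V₂ ↑s|)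
    (h₂ : ℝ → ℝ) (h₂0 : h₂ 0 = x)
    (hode₂ : ∀ s ∈ Set.Icc (0 : ℝ) t, 0 < h₂ s - V₂ s ∧
      HasDerivWithinAt h₂ (-2 / (h₂ s - V₂ s)) (Set.Icc 0 t) s) :
    ∃ h₁ : ℝ → ℝ, h₁ 0 = x + δ ∧ ∀ s ∈ Set.Icc (0 : ℝ) t, 0 < h₁ s - V₁ s ∧
      HasDerivWithinAt h₁ (-2 / (h₁ s - V₁ s)) (Set.Icc 0 t) s := by
  have hV₁' : ContinuousOn V₁ (Icc 0 t) := hV₁.mono Icc_subset_Ici_self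
  have hV₂' : ContinuousOn V₂ (Icc 0 t) := hV₂.mono Icc_subset_Ici_self
  have hh₂ : ContinuousOn h₂ (Icc 0 t) := fun s hs => (hode₂ s hs).2.continuousWithinAt
  obtain ⟨s₀, hs₀, hmin⟩ := isCompact_Icc.exists_isMinOn (nonempty_Icc.2 ht.le) (hh₂.sub hV₂')
  set m := h₂ s₀ - V₂ s₀
  have hm : 0 < m := (hode₂ s₀ hs₀).1
  have hgap : ∀ s ∈ Icc 0 t, m ≤ h₂ s - V₂ s := fun s hs => hmin hs
  have hdrift : ∀ s ∈ Icc 0 t, V₁ s - V₂ s ≤ δ := fun s hs =>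
    (le_abs_self _).trans (hδ ▸ (hV₁'.sub hV₂').abs.le_ciSup_of_isCompact isCompact_Icc hs)
  obtain ⟨h₁, h₁0, hode₁⟩ := exists_hasDerivWithinAt_of_lipschitzWith_of_norm_le ht.le
    (fun s _ => lipschitzWith_truncatedLoewnerField hm s)
    (continuousOn_truncatedLoewnerField hV₁' hm)
    (M := (2 / m).toNNReal) (fun _ _ _ => by
      rw [Real.norm_eq_abs, Real.coe_toNNReal _ (by positivity)]
      exact abs_truncatedLoewnerField_le hm) (x + δ)
  have hcomp : ∀ s ∈ Icc 0 t, h₂ s + δ ≤ h₁ s :=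
    le_of_subsolution_of_solution (fun s _ => lipschitzWith_truncatedLoewnerField hm s) hode₁
      (fun s hs => (hode₂ s hs).2.add_const δ)
      (fun s hs => neg_two_div_le_truncatedLoewnerField (hode₂ s (Ico_subset_Icc_self hs)).1
        (by linarith [hdrift s (Ico_subset_Icc_self hs)]))
      (by rw [h₁0, h₂0])
  refine ⟨h₁, h₁0, fun s hs => ?_⟩
  have hm₁ : m ≤ h₁ s - V₁ s := by linarith [hgap s hs, hdrift s hs, hcomp s hs]
  exact ⟨hm.trans_le hm₁, truncatedLoewnerField_of_le hm₁ ▸ hode₁ s hs⟩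

/-- **Comparison of swallowing times of the reverse Loewner flow (Lemma 5.1).**
Let `δ = sup_{s ∈ [0,t]} |V¹ s - V² s|`. If the reverse Loewner flow with driver `V²`
started at `x > 0` survives (stays strictly above the driver) on all of `[0,t]`, then so
does the reverse flow with driver `V¹` started at `x + δ`. Equivalently, for the
swallowing times: `T¹(x + δ) ≤ t` implies `T²(x) ≤ t`. -/
theorem stmt7 (V₁ V₂ : ℝ → ℝ)
    (hV₁ : ContinuousOn V₁ (Set.Ici 0)) (hV₂ : ContinuousOn V₂ (Set.Ici 0))
    (hV₁0 : V₁ 0 = 0) (hV₂0 : V₂ 0 = 0)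
    (t x : ℝ) (ht : 0 < t) (hx : 0 < x)
    (δ : ℝ) (hδ : δ = ⨆ s : Set.Icc (0 : ℝ) t, |V₁ ↑s - V₂ ↑s|)
    (h₂ : ℝ → ℝ) (h₂0 : h₂ 0 = x)
    (hode₂ : ∀ s ∈ Set.Icc (0 : ℝ) t, 0 < h₂ s - V₂ s ∧
      HasDerivWithinAt h₂ (-2 / (h₂ s - V₂ s)) (Set.Icc 0 t) s) :
    ∃ h₁ : ℝ → ℝ, h₁ 0 = x + δ ∧ ∀ s ∈ Set.Icc (0 : ℝ) t, 0 < h₁ s - V₁ s ∧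
      HasDerivWithinAt h₁ (-2 / (h₁ s - V₁ s)) (Set.Icc 0 t) s :=
  stmt7_general V₁ V₂ hV₁ hV₂ t x ht δ hδ h₂ h₂0 hode₂
end

section
/- Pathwise comparison of two reverse Loewner flows (claim in the proof of Lemma 5.1): Let t' > 0, let V¹, V² : [0,t'] → ℝ be continuous with V¹(0) = V²(0) = 0, let x > 0 and let δ > 0 satisfy sup_{s∈[0,t']} |V¹(s) − V²(s)| ≤ δ. Suppose h¹, h² : [0,t'] → ℝ satisfy h¹(0) = x + δ, h²(0) = x, and for j = 1,2 and all s ∈ [0,t']: h^j(s) − V^j(s) > 0 and (h^j)'(s) = −2/(h^j(s) − V^j(s)). Then for all s ∈ [0,t']: h²(s) − V²(s) < h¹(s) − V¹(s), and consequently (h²)'(s) < (h¹)'(s). -/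
/-!
The gap `g = (h¹ - V¹) - (h² - V²)` starts at `δ > 0`. As long as it stays positive, the flow
equation gives `(h¹ - h²)' = 2/(h² - V²) - 2/(h¹ - V¹) > 0`, so `h¹ - h²` increases strictly from
its initial value `δ`, while `V¹ - V² ≤ δ`. Hence at a first zero `τ > 0` of `g` we would have
`g τ = (h¹ - h²)(τ) - (V¹ - V²)(τ) > δ - δ = 0`, which is absurd.
-/

open Set

theorem pos_on_Icc_of_pos_before {g : ℝ → ℝ} {a b : ℝ} (hg : ContinuousOn g (Icc a b))
    (ha : 0 < g a) (hstep : ∀ τ ∈ Ioc a b, (∀ s ∈ Ico a τ, 0 < g s) → 0 < g τ) :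
    ∀ s ∈ Icc a b, 0 < g s := by
  by_contra! hex
  set S := Icc a b ∩ g ⁻¹' Iic 0
  have hSne : S.Nonempty := hex
  have hSbdd : BddBelow S := ⟨a, fun s hs => hs.1.1⟩
  have hSclosed : IsClosed S := hg.preimage_isClosed_of_isClosed isClosed_Icc isClosed_Iic
  have hτS : sInf S ∈ S := hSclosed.csInf_mem hSne hSbdd
  have hτa : a < sInf S := hτS.1.1.lt_of_ne fun h => (h ▸ hτS.2 : g a ≤ 0).not_gt ha
  refine (hτS.2 : g (sInf S) ≤ 0).not_gt (hstep _ ⟨hτa, hτS.1.2⟩ fun s hs => ?_)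
  by_contra! hgs
  exact (csInf_le hSbdd ⟨⟨hs.1, hs.2.le.trans hτS.1.2⟩, hgs⟩).not_gt hs.2

def IsReverseLoewnerSolution (V h : ℝ → ℝ) (T : ℝ) : Prop :=
  ∀ s ∈ Icc 0 T, 0 < h s - V s ∧ HasDerivWithinAt h (-2 / (h s - V s)) (Icc 0 T) s

namespace IsReverseLoewnerSolution

variable {V₁ V₂ h₁ h₂ : ℝ → ℝ} {T : ℝ}

theorem continuousOn {V h : ℝ → ℝ} (hsol : IsReverseLoewnerSolution V h T) :
    ContinuousOn h (Icc 0 T) :=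
  HasDerivWithinAt.continuousOn fun s hs => (hsol s hs).2

theorem sub_strictMonoOn_of_gap_pos (h₁sol : IsReverseLoewnerSolution V₁ h₁ T)
    (h₂sol : IsReverseLoewnerSolution V₂ h₂ T) {τ : ℝ} (hτT : τ ≤ T)
    (hgap : ∀ s ∈ Ico 0 τ, h₂ s - V₂ s < h₁ s - V₁ s) :
    StrictMonoOn (fun s => h₁ s - h₂ s) (Icc 0 τ) := by
  have hsub : Icc 0 τ ⊆ Icc 0 T := Icc_subset_Icc_right hτT
  refine strictMonoOn_of_hasDerivWithinAt_pos (convex_Icc 0 τ)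
    ((h₁sol.continuousOn.sub h₂sol.continuousOn).mono hsub)
    (f' := fun s => -2 / (h₁ s - V₁ s) - -2 / (h₂ s - V₂ s)) ?_ ?_
  all_goals
    rw [interior_Icc]
    intro s hs
    have hsT : s ∈ Icc 0 T := hsub (Ioo_subset_Icc_self hs)
  · exact ((h₁sol s hsT).2.sub (h₂sol s hsT).2).mono (Ioo_subset_Icc_self.trans hsub)
  · have hrecip : 2 / (h₁ s - V₁ s) < 2 / (h₂ s - V₂ s) :=
      div_lt_div_of_pos_left two_pos (h₂sol s hsT).1 (hgap s (Ioo_subset_Ico_self hs))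
    simp only [neg_div, sub_neg_eq_add]
    linarith

theorem sub_lt_sub (h₁sol : IsReverseLoewnerSolution V₁ h₁ T)
    (h₂sol : IsReverseLoewnerSolution V₂ h₂ T)
    (hV₁ : ContinuousOn V₁ (Icc 0 T)) (hV₂ : ContinuousOn V₂ (Icc 0 T))
    (hdist : ∀ s ∈ Icc 0 T, V₁ s - V₂ s ≤ h₁ 0 - h₂ 0)
    (h0 : h₂ 0 - V₂ 0 < h₁ 0 - V₁ 0) :
    ∀ s ∈ Icc 0 T, h₂ s - V₂ s < h₁ s - V₁ s := by
  have hg : ContinuousOn (fun s => (h₁ s - V₁ s) - (h₂ s - V₂ s)) (Icc 0 T) :=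
    (h₁sol.continuousOn.sub hV₁).sub (h₂sol.continuousOn.sub hV₂)
  have hgpos := pos_on_Icc_of_pos_before hg (sub_pos.2 h0) fun τ hτ hgap => by
    have hmono := sub_strictMonoOn_of_gap_pos h₁sol h₂sol hτ.2 fun s hs => sub_pos.1 (hgap s hs)
    have hgrow : h₁ 0 - h₂ 0 < h₁ τ - h₂ τ :=
      hmono (left_mem_Icc.2 hτ.1.le) (right_mem_Icc.2 hτ.1.le) hτ.1
    linarith [hdist τ ⟨hτ.1.le, hτ.2⟩]
  exact fun s hs => sub_pos.1 (hgpos s hs)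

end IsReverseLoewnerSolution

theorem stmt8_general (t' : ℝ) (V₁ V₂ : ℝ → ℝ)
    (hV₁ : ContinuousOn V₁ (Set.Icc 0 t')) (hV₂ : ContinuousOn V₂ (Set.Icc 0 t'))
    (hV₁0 : V₁ 0 = 0) (hV₂0 : V₂ 0 = 0)
    (x δ : ℝ) (hδ : 0 < δ)
    (hdist : ∀ s ∈ Set.Icc (0 : ℝ) t', |V₁ s - V₂ s| ≤ δ)
    (h₁ h₂ : ℝ → ℝ) (h₁0 : h₁ 0 = x + δ) (h₂0 : h₂ 0 = x)
    (hode₁ : ∀ s ∈ Set.Icc (0 : ℝ) t', 0 < h₁ s - V₁ s ∧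
      HasDerivWithinAt h₁ (-2 / (h₁ s - V₁ s)) (Set.Icc 0 t') s)
    (hode₂ : ∀ s ∈ Set.Icc (0 : ℝ) t', 0 < h₂ s - V₂ s ∧
      HasDerivWithinAt h₂ (-2 / (h₂ s - V₂ s)) (Set.Icc 0 t') s) :
    ∀ s ∈ Set.Icc (0 : ℝ) t',
      h₂ s - V₂ s < h₁ s - V₁ s ∧ -2 / (h₂ s - V₂ s) < -2 / (h₁ s - V₁ s) := by
  have hcmp := IsReverseLoewnerSolution.sub_lt_sub hode₁ hode₂ hV₁ hV₂
    (fun s hs => by linarith [(abs_le.1 (hdist s hs)).2]) (by linarith)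
  intro s hs
  refine ⟨hcmp s hs, ?_⟩
  rw [neg_div, neg_div, neg_lt_neg_iff]
  exact div_lt_div_of_pos_left two_pos (hode₂ s hs).1 (hcmp s hs)

/-- **Pathwise comparison of two reverse Loewner flows (claim in the proof of Lemma 5.1).**
If `h¹` solves the reverse Loewner equation with driver `V¹` started at `x + δ`, and `h²`
solves it with driver `V²` started at `x`, where `sup_{[0,t']} |V¹ - V²| ≤ δ`, then
`h² s - V² s < h¹ s - V¹ s` and consequently `(h²)'(s) < (h¹)'(s)` on `[0,t']`. -/
theorem stmt8 (t' : ℝ) (ht' : 0 < t') (V₁ V₂ : ℝ → ℝ)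
    (hV₁ : ContinuousOn V₁ (Set.Icc 0 t')) (hV₂ : ContinuousOn V₂ (Set.Icc 0 t'))
    (hV₁0 : V₁ 0 = 0) (hV₂0 : V₂ 0 = 0)
    (x δ : ℝ) (hx : 0 < x) (hδ : 0 < δ)
    (hdist : ∀ s ∈ Set.Icc (0 : ℝ) t', |V₁ s - V₂ s| ≤ δ)
    (h₁ h₂ : ℝ → ℝ) (h₁0 : h₁ 0 = x + δ) (h₂0 : h₂ 0 = x)
    (hode₁ : ∀ s ∈ Set.Icc (0 : ℝ) t', 0 < h₁ s - V₁ s ∧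
      HasDerivWithinAt h₁ (-2 / (h₁ s - V₁ s)) (Set.Icc 0 t') s)
    (hode₂ : ∀ s ∈ Set.Icc (0 : ℝ) t', 0 < h₂ s - V₂ s ∧
      HasDerivWithinAt h₂ (-2 / (h₂ s - V₂ s)) (Set.Icc 0 t') s) :
    ∀ s ∈ Set.Icc (0 : ℝ) t',
      h₂ s - V₂ s < h₁ s - V₁ s ∧ -2 / (h₂ s - V₂ s) < -2 / (h₁ s - V₁ s) :=
  stmt8_general t' V₁ V₂ hV₁ hV₂ hV₁0 hV₂0 x δ hδ hdist h₁ h₂ h₁0 h₂0 hode₁ hode₂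
end

section
/- Uniform swallowing of an interval for perturbations of subcritical Hölder drivers (Corollary 5.2): For every M ∈ (0,4) there exists a constant c > 0 such that the following holds. Let T > 0 and let V : [0,T] → ℝ satisfy V(0) = 0 and |V(s) − V(r)| ≤ M√|s − r| for all r, s ∈ [0,T]. Let t ∈ (0,T], let W : [0,T] → ℝ be continuous with W(0) = 0 and sup_{s∈[0,t]} |W(s) − V(s)| ≤ c√t, and let x ∈ ℝ with 0 < |x| ≤ c√t. Then there is no function h : [0,t] → ℝ with h(0) = x such that h(s) − W(s) ≠ 0 and h'(s) = −2/(h(s) − W(s)) for all s ∈ [0,t]; that is, the reverse Loewner flow with driver W started at x is swallowed by time t (T^W(x) ≤ t). -/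
/-!
Reflecting `(W, h, x)` to `(-W, -h, -x)` if necessary, take `x > 0`. Then `g = h - W` stays
positive and `h` decreases. With `p = h + c√t`, the bounds on `V` and on `W - V` give `0 < g ≤ p + M√s`, so
`a = p / √s` satisfies `s a' ≤ -(a² + M a + 4) / (2 (a + M))`, and `a² + M a + 4 ≥ 4 - M²/4 > 0`
because `M < 4` (no self-similar solution `a√s` exists). On `[c²t, t]` we have `a ≤ 2`, so `a`
decreases at a definite rate in `log s`, and over the interval it loses `2 + M`. Hence
`a(t) ≤ -M`, i.e. `g(t) ≤ p(t) + M√t ≤ 0`, a contradiction.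
-/

open Set Real

def SolvesReverseLoewnerOn (W h : ℝ → ℝ) (t : ℝ) : Prop :=
  ∀ s ∈ Icc 0 t, h s - W s ≠ 0 ∧ HasDerivWithinAt h (-2 / (h s - W s)) (Icc 0 t) s

namespace SolvesReverseLoewnerOn

variable {W h : ℝ → ℝ} {t : ℝ}

theorem neg (hs : SolvesReverseLoewnerOn W h t) : SolvesReverseLoewnerOn (-W) (-h) t := by
  intro s hst
  obtain ⟨hne, hd⟩ := hs s hst
  have hgap : (-h) s - (-W) s = -(h s - W s) := by simp only [Pi.neg_apply]; ring
  rw [hgap, div_neg]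
  exact ⟨neg_ne_zero.2 hne, hd.neg⟩

theorem continuousOn (hs : SolvesReverseLoewnerOn W h t) : ContinuousOn h (Icc 0 t) :=
  fun s hst => (hs s hst).2.continuousWithinAt

theorem sub_pos (hs : SolvesReverseLoewnerOn W h t) (hW : ContinuousOn W (Icc 0 t))
    (h0 : W 0 < h 0) : ∀ s ∈ Icc 0 t, 0 < h s - W s := by
  intro s hst
  by_contra! hneg
  obtain ⟨r, hr, hr0⟩ := isPreconnected_Icc.intermediate_value hst
    (left_mem_Icc.2 (hst.1.trans hst.2)) (hs.continuousOn.sub hW) ⟨hneg, (_root_.sub_pos.2 h0).le⟩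
  exact (hs r hr).1 hr0

theorem antitoneOn (hs : SolvesReverseLoewnerOn W h t) (hpos : ∀ s ∈ Icc 0 t, 0 < h s - W s) :
    AntitoneOn h (Icc 0 t) := by
  refine antitoneOn_of_hasDerivWithinAt_nonpos (convex_Icc 0 t) hs.continuousOn
    (fun s hst => ((hs s (interior_subset hst)).2).mono interior_subset) fun s hst => ?_
  exact (div_neg_of_neg_of_pos (by norm_num) (hpos s (interior_subset hst))).le

end SolvesReverseLoewnerOn

theorem subcritical_drift_le {M A a : ℝ} (hM : M ^ 2 < 16) (ha : 0 < a + M) (haA : a ≤ A) :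
    (16 - M ^ 2) / (8 * (A + M)) ≤ 2 / (a + M) + a / 2 := by
  have hAM : a + M ≤ A + M := by linarith
  calc (16 - M ^ 2) / (8 * (A + M)) ≤ (16 - M ^ 2) / (8 * (a + M)) := by
        gcongr
    _ ≤ (a ^ 2 + M * a + 4) / (2 * (a + M)) := by
        rw [div_le_div_iff₀ (by positivity) (by positivity)]
        nlinarith [sq_nonneg (2 * a + M)]
    _ = 2 / (a + M) + a / 2 := by field_simp; ring

theorem antitoneOn_div_sqrt_add_log {M A u₀ t : ℝ} {p p' : ℝ → ℝ} (hM : M ^ 2 < 16)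
    (hu₀ : 0 < u₀) (hp : ∀ u ∈ Icc u₀ t, HasDerivWithinAt p (p' u) (Icc u₀ t) u)
    (hpos : ∀ u ∈ Icc u₀ t, 0 < p u + M * √u)
    (hp' : ∀ u ∈ Icc u₀ t, p' u ≤ -2 / (p u + M * √u))
    (hA : ∀ u ∈ Icc u₀ t, p u ≤ A * √u) :
    AntitoneOn (fun u => p u / √u + (16 - M ^ 2) / (8 * (A + M)) * log u) (Icc u₀ t) := by
  set K := (16 - M ^ 2) / (8 * (A + M))
  have hIcc_pos : ∀ u ∈ Icc u₀ t, 0 < u := fun u hu => hu₀.trans_le hu.1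
  have hcont : ContinuousOn p (Icc u₀ t) := fun u hu => (hp u hu).continuousWithinAt
  refine antitoneOn_of_hasDerivWithinAt_nonpos (convex_Icc u₀ t)
    (f' := fun u => (p' u * √u - p u * (1 / (2 * √u))) / √u ^ 2 + K * u⁻¹) ?_ ?_ ?_
  · refine (hcont.div (continuous_sqrt.continuousOn) fun u hu => ?_).add
      ((continuousOn_const.mul (continuousOn_log.mono fun u hu => ?_)))
    · exact (sqrt_pos.2 (hIcc_pos u hu)).ne'
    · exact (hIcc_pos u hu).ne'
  · intro u hu
    have hu' := interior_subset hu
    rw [interior_Icc] at hu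
    have hu0 := (hIcc_pos u hu').ne'
    exact (((hp u hu').hasDerivAt (Icc_mem_nhds hu.1 hu.2)).div (hasDerivAt_sqrt hu0)
      (sqrt_ne_zero'.2 (hIcc_pos u hu'))).add ((hasDerivAt_log hu0).const_mul K)
      |>.hasDerivWithinAt
  · intro u hu
    replace hu := interior_subset hu
    have hs : 0 < √u := sqrt_pos.2 (hIcc_pos u hu)
    set a := p u / √u
    have hpa : p u = a * √u := (div_mul_cancel₀ _ hs.ne').symm
    have haM : 0 < a + M := by
      have := hpos u hu
      rw [hpa, ← add_mul] at this
      exact pos_of_mul_pos_left this hs.le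
    have hdrift : K ≤ 2 / (a + M) + a / 2 :=
      subcritical_drift_le hM haM ((div_le_iff₀ hs).2 (hA u hu))
    have hp's : p' u * √u ≤ -2 / (a + M) := by
      have := mul_le_mul_of_nonneg_right (hp' u hu) hs.le
      rwa [hpa, ← add_mul, div_mul_eq_div_div, div_mul_cancel₀ _ hs.ne'] at this
    have hval : (p' u * √u - p u * (1 / (2 * √u))) / √u ^ 2 + K * u⁻¹
        = (p' u * √u - a / 2 + K) / √u ^ 2 := by
      rw [sq_sqrt (hIcc_pos u hu).le, hpa]
      field_simp
    rw [neg_div] at hp's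
    rw [hval]
    exact div_nonpos_of_nonpos_of_nonneg (by linarith) (sq_nonneg _)

noncomputable def swallowConst (M : ℝ) : ℝ := exp (-(4 * (2 + M) ^ 2 / (16 - M ^ 2)))

theorem swallowConst_pos (M : ℝ) : 0 < swallowConst M := exp_pos _

theorem swallowConst_le_one {M : ℝ} (hM : M ^ 2 < 16) : swallowConst M ≤ 1 :=
  exp_le_one_iff.2 (neg_nonpos.2 (div_nonneg (by positivity) (by linarith)))

theorem drift_rate_mul_log_swallowConst {M : ℝ} (hM : 0 ≤ M) (hM2 : M ^ 2 < 16) {t : ℝ}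
    (ht : 0 < t) :
    (16 - M ^ 2) / (8 * (2 + M)) * (log t - log (swallowConst M ^ 2 * t)) = 2 + M := by
  rw [log_mul (pow_pos (swallowConst_pos M) 2).ne' ht.ne', log_pow, swallowConst, log_exp]
  have : 16 - M ^ 2 ≠ 0 := by linarith
  field_simp
  ring

theorem not_solvesReverseLoewnerOn_of_pos {M t x : ℝ} {W h : ℝ → ℝ} (hM : 0 ≤ M) (hM4 : M < 4)
    (ht : 0 < t) (hWc : ContinuousOn W (Icc 0 t)) (hW0 : W 0 = 0)
    (hW : ∀ u ∈ Icc 0 t, |W u| ≤ M * √u + swallowConst M * √t)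
    (hx : 0 < x) (hxc : x ≤ swallowConst M * √t) (hh0 : h 0 = x) :
    ¬ SolvesReverseLoewnerOn W h t := by
  intro hs
  have hM2 : M ^ 2 < 16 := by nlinarith
  set c := swallowConst M
  have hc0 : 0 < c := swallowConst_pos M
  have hgap : ∀ u ∈ Icc 0 t, 0 < h u - W u := hs.sub_pos hWc (by rw [hh0, hW0]; exact hx)
  set u₀ := c ^ 2 * t
  have hu₀ : 0 < u₀ := by positivity
  have hu₀t : u₀ ≤ t := mul_le_of_le_one_left ht.le (pow_le_one₀ hc0.le (swallowConst_le_one hM2))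
  have hsub : Icc u₀ t ⊆ Icc 0 t := Icc_subset_Icc_left hu₀.le
  set p := fun u => h u + c * √t
  have hgap_le : ∀ u ∈ Icc 0 t, h u - W u ≤ p u + M * √u := fun u hu => by
    linarith [neg_abs_le (W u), hW u hu]
  have hp_le : ∀ u ∈ Icc u₀ t, p u ≤ 2 * √u := fun u hu => by
    have hh_le := hs.antitoneOn hgap ⟨le_rfl, ht.le⟩ (hsub hu) (hu₀.le.trans hu.1)
    have hsqrt_le := sqrt_le_sqrt hu.1
    have hsqrt₀ : √u₀ = c * √t := by rw [sqrt_mul (sq_nonneg c), sqrt_sq hc0.le]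
    simp only [p]
    linarith
  have hL := antitoneOn_div_sqrt_add_log (p := p) (p' := fun u => -2 / (h u - W u)) hM2 hu₀
    (fun u hu => ((hs u (hsub hu)).2.mono hsub).add_const _)
    (fun u hu => (hgap u (hsub hu)).trans_le (hgap_le u (hsub hu)))
    (fun u hu => by
      rw [neg_div, neg_div, neg_le_neg_iff]
      exact div_le_div_of_nonneg_left zero_le_two (hgap u (hsub hu)) (hgap_le u (hsub hu)))
    hp_le (left_mem_Icc.2 hu₀t) (right_mem_Icc.2 hu₀t) hu₀t
  have hst : 0 < √t := sqrt_pos.2 ht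
  have hend : -M < p t / √t := by
    rw [lt_div_iff₀ hst]
    linarith [hgap t ⟨ht.le, le_rfl⟩, hgap_le t ⟨ht.le, le_rfl⟩]
  have hstart : p u₀ / √u₀ ≤ 2 := (div_le_iff₀ (sqrt_pos.2 hu₀)).2 (hp_le u₀ ⟨le_rfl, hu₀t⟩)
  have hlog := drift_rate_mul_log_swallowConst hM hM2 ht
  simp only at hL
  linarith

/-- **Uniform swallowing of an interval for perturbations of subcritical Hölder drivers
(Corollary 5.2).** For every `M ∈ (0,4)` there is `c > 0` such that: if `V` is
`M`-Hölder-`1/2` on `[0,T]` with `V 0 = 0`, `t ∈ (0,T]`, `W` is continuous with `W 0 = 0`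
and `sup_{[0,t]} |W - V| ≤ c √t`, and `0 < |x| ≤ c √t`, then the reverse Loewner flow with
driver `W` started at `x` cannot survive on all of `[0,t]`, i.e. `T^W(x) ≤ t`. -/
theorem stmt9 :
    ∀ M : ℝ, 0 < M → M < 4 → ∃ c > (0 : ℝ),
      ∀ T : ℝ, 0 < T → ∀ V : ℝ → ℝ, V 0 = 0 →
        (∀ r ∈ Set.Icc (0 : ℝ) T, ∀ s ∈ Set.Icc (0 : ℝ) T,
          |V s - V r| ≤ M * Real.sqrt |s - r|) →
        ∀ t ∈ Set.Ioc (0 : ℝ) T, ∀ W : ℝ → ℝ, ContinuousOn W (Set.Icc 0 T) → W 0 = 0 →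
          (∀ s ∈ Set.Icc (0 : ℝ) t, |W s - V s| ≤ c * Real.sqrt t) →
          ∀ x : ℝ, x ≠ 0 → |x| ≤ c * Real.sqrt t →
            ¬ ∃ h : ℝ → ℝ, h 0 = x ∧ ∀ s ∈ Set.Icc (0 : ℝ) t, h s - W s ≠ 0 ∧
              HasDerivWithinAt h (-2 / (h s - W s)) (Set.Icc 0 t) s := by
  intro M hM0 hM4
  refine ⟨swallowConst M, swallowConst_pos M, ?_⟩
  rintro T - V hV0 hVH t ⟨ht, htT⟩ W hWc hW0 hWV x hx hxc ⟨h, hh0, hs⟩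
  have hsub : Icc 0 t ⊆ Icc 0 T := Icc_subset_Icc_right htT
  have hW : ∀ u ∈ Icc 0 t, |W u| ≤ M * √u + swallowConst M * √t := fun u hu => by
    have hV := hVH 0 ⟨le_rfl, ht.le.trans htT⟩ u (hsub hu)
    rw [hV0, sub_zero, sub_zero, abs_of_nonneg hu.1] at hV
    have hWVu := abs_add_le (W u - V u) (V u)
    rw [sub_add_cancel] at hWVu
    linarith [hWV u hu]
  rcases hx.lt_or_gt with hneg | hpos
  · exact not_solvesReverseLoewnerOn_of_pos hM0.le hM4 ht (hWc.mono hsub).neg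
      (by simp [hW0]) (fun u hu => by simpa using hW u hu) (neg_pos.2 hneg)
      (by rwa [abs_of_neg hneg] at hxc) (by simp [hh0]) (SolvesReverseLoewnerOn.neg hs)
  · exact not_solvesReverseLoewnerOn_of_pos hM0.le hM4 ht (hWc.mono hsub) hW0 hW hpos
      (by rwa [abs_of_pos hpos] at hxc) hh0 hs
end
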